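/- For every duplicative forest f, the posets D*(f) and D*(pr(f)) (each ordered by ≪) are order-isomorphic. -/

import Mathlib

/-- Mockingbird terms: the constant `M`, variables `x i`, and applications. -/
inductive MTerm : Type
  | M : MTerm
  | var : ℕ → MTerm
  | app : MTerm → MTerm → MTerm
  deriving DecidableEq

/-- The one-step rewrite relation `⇒` on Mockingbird terms. -/
inductive Step : MTerm → MTerm → Prop
  | mock (t : MTerm) : Step (MTerm.app MTerm.M t) (MTerm.app t t)
  | left {t1 t1' : MTerm} (t2 : MTerm) :
      Step t1 t1' → Step (MTerm.app t1 t2) (MTerm.app t1' t2)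
  | right (t1 : MTerm) {t2 t2' : MTerm} :
      Step t2 t2' → Step (MTerm.app t1 t2) (MTerm.app t1 t2')

/-- `≼`, the reflexive-transitive closure of `⇒`. -/
def MLe : MTerm → MTerm → Prop := Relation.ReflTransGen Step

/-- `≡`, the reflexive-symmetric-transitive closure of `⇒`. -/
def MEquiv : MTerm → MTerm → Prop := Relation.EqvGen Step

/-- Strict version of `≼`. -/
def MLt (s t : MTerm) : Prop := MLe s t ∧ s ≠ t

/-- Covering relation for `≼`. -/
def MCovBy (s t : MTerm) : Prop := MLt s t ∧ ∀ z, MLt s z → ¬ MLt z t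

/-- Duplicative trees: white or black nodes with a list (forest) of children. -/
inductive DTree : Type
  | W : List DTree → DTree
  | B : List DTree → DTree

/-- The one-step relation `⋖` on duplicative forests. -/
inductive DStep : List DTree → List DTree → Prop
  | dup (g : List DTree) : DStep [DTree.W g] [DTree.B (g ++ g)]
  | white {g g' : List DTree} : DStep g g' → DStep [DTree.W g] [DTree.W g']
  | black {g g' : List DTree} : DStep g g' → DStep [DTree.B g] [DTree.B g']
  | head {t t' : DTree} (f : List DTree) : DStep [t] [t'] → DStep (t :: f) (t' :: f)
  | tail (t : DTree) {f f' : List DTree} : DStep f f' → DStep (t :: f) (t :: f')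

/-- `≪`, the reflexive-transitive closure of `⋖`. -/
def DLe : List DTree → List DTree → Prop := Relation.ReflTransGen DStep

/-- The map `fr` from Mockingbird terms to duplicative forests. -/
def fr : MTerm → List DTree
  | MTerm.M => []
  | MTerm.var _ => []
  | MTerm.app MTerm.M MTerm.M => [DTree.B []]
  | MTerm.app MTerm.M t' => [DTree.W (fr t')]
  | MTerm.app t t' => [DTree.B (fr t ++ fr t')]

mutual
  /-- The pruning map on duplicative trees (returns a forest). -/
  def prT : DTree → List DTree
    | DTree.W g => [DTree.W (prF g)]
    | DTree.B g => prF g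
  /-- The pruning map on duplicative forests. -/
  def prF : List DTree → List DTree
    | [] => []
    | t :: f => prT t ++ prF f
end

mutual
  /-- The statistic `mtStat` on duplicative trees. -/
  def mtStat : DTree → ℕ
    | DTree.W g => 2 * ml g
    | DTree.B g => ml g
  /-- Sum of `mtStat` over the trees of a forest. -/
  def mtsum : List DTree → ℕ
    | [] => 0
    | t :: f => mtStat t + mtsum f
  /-- The statistic `ml` on duplicative forests: `1 - ℓ + Σ mtStat`. -/
  def ml : List DTree → ℕ
    | f => mtsum f + 1 - f.length
end

mutual
  /-- Number of white nodes in a duplicative tree. -/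
  def whitesT : DTree → ℕ
    | DTree.W g => 1 + whitesF g
    | DTree.B g => whitesF g
  /-- Number of white nodes in a duplicative forest. -/
  def whitesF : List DTree → ℕ
    | [] => 0
    | t :: f => whitesT t + whitesF f
end

/-- Closed terms: no variables. -/
def MClosed : MTerm → Prop
  | MTerm.M => True
  | MTerm.var _ => False
  | MTerm.app a b => MClosed a ∧ MClosed b

/-- Degree: number of applications. -/
def deg : MTerm → ℕ
  | MTerm.M => 0
  | MTerm.var _ => 0
  | MTerm.app a b => deg a + deg b + 1

/-- Subterm relation. -/
inductive Subterm : MTerm → MTerm → Prop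
  | refl (t : MTerm) : Subterm t t
  | left {s a : MTerm} (b : MTerm) : Subterm s a → Subterm s (MTerm.app a b)
  | right (a : MTerm) {s b : MTerm} : Subterm s b → Subterm s (MTerm.app a b)

/-- The term `r_d`. -/
def rTerm : ℕ → MTerm
  | 0 => MTerm.M
  | d + 1 => MTerm.app MTerm.M (rTerm d)

/-- Saturated chain from `a` to `b`, given as the list of its elements. -/
def SatChain (a b : MTerm) (c : List MTerm) : Prop :=
  List.Chain' MCovBy c ∧ c.head? = some a ∧ c.getLast? = some b

open DTree

lemma dstep_length {f f'} (h : DStep f f') : f.length = f'.length := by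
  induction h <;> simp_all

lemma dle_length {f f'} (h : DLe f f') : f.length = f'.length := by
  induction h with
  | refl => rfl
  | tail _ h ih => exact ih.trans (dstep_length h)

lemma not_dstep_nil {x} (h : DStep [] x) : False := by cases h

lemma dle_refl (f : List DTree) : DLe f f := Relation.ReflTransGen.refl

lemma dle_trans {a b c} (h1 : DLe a b) (h2 : DLe b c) : DLe a c := h1.trans h2

lemma dstep_append_right {a a'} (b : List DTree) (h : DStep a a') :
    DStep (a ++ b) (a' ++ b) := by
  induction h with
  | dup g => exact DStep.head b (DStep.dup g)
  | white h => exact DStep.head b (DStep.white h)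
  | black h => exact DStep.head b (DStep.black h)
  | head f h _ => exact DStep.head _ h
  | tail t h ih => exact DStep.tail t ih

lemma dstep_append_left (a : List DTree) {b b'} (h : DStep b b') :
    DStep (a ++ b) (a ++ b') := by
  induction a with
  | nil => simpa using h
  | cons t f ih => exact DStep.tail t ih

lemma dle_append {a a' b b'} (h1 : DLe a a') (h2 : DLe b b') :
    DLe (a ++ b) (a' ++ b') := by
  refine Relation.ReflTransGen.trans
    (Relation.ReflTransGen.lift (fun x => x ++ b) (fun _ _ h => dstep_append_right b h) _ _ h1) ?_
  exact Relation.ReflTransGen.lift (fun x => a' ++ x) (fun _ _ h => dstep_append_left a' h) _ _ h2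

lemma dle_white {g g'} (h : DLe g g') : DLe [W g] [W g'] :=
  Relation.ReflTransGen.lift (fun x => [W x]) (fun _ _ h => DStep.white h) _ _ h

lemma dle_black {g g'} (h : DLe g g') : DLe [B g] [B g'] :=
  Relation.ReflTransGen.lift (fun x => [B x]) (fun _ _ h => DStep.black h) _ _ h

lemma dstep_cons_inv {t f x} (h : DStep (t :: f) x) :
    (∃ t', x = t' :: f ∧ DStep [t] [t']) ∨ (∃ f', x = t :: f' ∧ DStep f f') := by
  cases h with
  | dup g => exact Or.inl ⟨_, rfl, DStep.dup g⟩
  | white h => exact Or.inl ⟨_, rfl, DStep.white h⟩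
  | black h => exact Or.inl ⟨_, rfl, DStep.black h⟩
  | head f h => exact Or.inl ⟨_, rfl, h⟩
  | tail t h => exact Or.inr ⟨_, rfl, h⟩

lemma dstep_append_inv {a b c} (h : DStep (a ++ b) c) :
    (∃ a', c = a' ++ b ∧ DStep a a') ∨ (∃ b', c = a ++ b' ∧ DStep b b') := by
  induction a generalizing c with
  | nil => exact Or.inr ⟨c, rfl, h⟩
  | cons t f ih =>
    rcases dstep_cons_inv h with ⟨t', rfl, h'⟩ | ⟨f', rfl, h'⟩
    · exact Or.inl ⟨t' :: f, rfl, DStep.head f h'⟩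
    · rcases ih h' with ⟨a', rfl, h''⟩ | ⟨b', rfl, h''⟩
      · exact Or.inl ⟨t :: a', rfl, DStep.tail t h''⟩
      · exact Or.inr ⟨b', rfl, h''⟩

lemma dle_append_inv {a b c} (h : DLe (a ++ b) c) :
    ∃ a' b', c = a' ++ b' ∧ a.length = a'.length ∧ DLe a a' ∧ DLe b b' := by
  induction h with
  | refl => exact ⟨a, b, rfl, rfl, dle_refl a, dle_refl b⟩
  | tail _ h ih =>
    obtain ⟨a', b', rfl, hl, h1, h2⟩ := ih
    rcases dstep_append_inv h with ⟨a'', rfl, h'⟩ | ⟨b'', rfl, h'⟩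
    · exact ⟨a'', b', rfl, hl.trans (dstep_length h'), h1.tail h', h2⟩
    · exact ⟨a', b'', rfl, hl, h1, h2.tail h'⟩

lemma dle_append_iff {a b c d : List DTree} (h : a.length = c.length) :
    DLe (a ++ b) (c ++ d) ↔ DLe a c ∧ DLe b d := by
  constructor
  · intro hh
    obtain ⟨a', b', heq, hl, h1, h2⟩ := dle_append_inv hh
    obtain ⟨rfl, rfl⟩ := List.append_inj heq.symm (hl.symm.trans h)
    exact ⟨h1, h2⟩
  · exact fun ⟨h1, h2⟩ => dle_append h1 h2

lemma dle_take {a b c : List DTree} (h : DLe (a ++ b) c) :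
    DLe a (c.take a.length) := by
  obtain ⟨a', b', rfl, hl, h1, _⟩ := dle_append_inv h
  rwa [hl, List.take_left]

lemma dle_drop {a b c : List DTree} (h : DLe (a ++ b) c) :
    DLe b (c.drop a.length) := by
  obtain ⟨a', b', rfl, hl, _, h2⟩ := dle_append_inv h
  rwa [hl, List.drop_left]

lemma dstep_B_inv : ∀ {y x}, DStep y x → ∀ g, y = [B g] → ∃ g', x = [B g'] ∧ DStep g g' := by
  intro y x h
  induction h with
  | dup g => intro g' hg; cases hg
  | white h => intro g' hg; cases hg
  | black h => intro g' hg; injection hg with h1 _; cases h1; exact ⟨_, rfl, h⟩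
  | head f h ih =>
    intro g hg
    injection hg with h1 h2
    subst h1; subst h2
    obtain ⟨g', hg', hs⟩ := ih g rfl
    injection hg' with h3 h4
    exact ⟨g', by rw [h3], hs⟩
  | tail t h ih =>
    intro g hg
    injection hg with h1 h2
    subst h2
    exact absurd h not_dstep_nil

lemma dstep_W_inv : ∀ {y x}, DStep y x → ∀ g, y = [W g] →
    (∃ g', x = [W g'] ∧ DStep g g') ∨ x = [B (g ++ g)] := by
  intro y x h
  induction h with
  | dup g => intro g' hg; injection hg with h1 _; cases h1; exact Or.inr rfl
  | white h => intro g' hg; injection hg with h1 _; cases h1; exact Or.inl ⟨_, rfl, h⟩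
  | black h => intro g' hg; cases hg
  | head f h ih =>
    intro g hg
    injection hg with h1 h2
    subst h1; subst h2
    rcases ih g rfl with ⟨g', hg', hs⟩ | hg'
    · injection hg' with h3 h4; exact Or.inl ⟨g', by rw [h3], hs⟩
    · injection hg' with h3 h4; exact Or.inr (by rw [h3])
  | tail t h ih =>
    intro g hg
    injection hg with h1 h2
    subst h2
    exact absurd h not_dstep_nil

lemma dle_B_inv {g x} (h : DLe [B g] x) : ∃ g', x = [B g'] ∧ DLe g g' := by
  induction h with
  | refl => exact ⟨g, rfl, dle_refl g⟩
  | tail _ h ih =>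
    obtain ⟨g', rfl, h1⟩ := ih
    obtain ⟨g'', rfl, h2⟩ := dstep_B_inv h g' rfl
    exact ⟨g'', rfl, h1.tail h2⟩

lemma dle_W_inv {g x} (h : DLe [W g] x) :
    (∃ g', x = [W g'] ∧ DLe g g') ∨ (∃ k, x = [B k] ∧ DLe (g ++ g) k) := by
  induction h with
  | refl => exact Or.inl ⟨g, rfl, dle_refl g⟩
  | tail _ h ih =>
    rcases ih with ⟨g', rfl, h1⟩ | ⟨k, rfl, h1⟩
    · rcases dstep_W_inv h g' rfl with ⟨g'', rfl, h2⟩ | rfl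
      · exact Or.inl ⟨g'', rfl, h1.tail h2⟩
      · exact Or.inr ⟨g' ++ g', rfl, dle_append h1 h1⟩
    · obtain ⟨k', rfl, h2⟩ := dstep_B_inv h k rfl
      exact Or.inr ⟨k', rfl, h1.tail h2⟩

lemma dle_WW {a b : List DTree} : DLe [W a] [W b] ↔ DLe a b := by
  constructor
  · intro h
    rcases dle_W_inv h with ⟨g', hg, h1⟩ | ⟨k, hk, _⟩
    · injection hg with h2 _; injection h2 with h3; rwa [h3]
    · injection hk with h2 _; cases h2
  · exact dle_white

lemma dle_BB {a b : List DTree} : DLe [B a] [B b] ↔ DLe a b := by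
  constructor
  · intro h
    obtain ⟨g', hg, h1⟩ := dle_B_inv h
    injection hg with h2 _; injection h2 with h3; rwa [h3]
  · exact dle_black

lemma dle_WB {a k : List DTree} : DLe [W a] [B k] ↔ DLe (a ++ a) k := by
  constructor
  · intro h
    rcases dle_W_inv h with ⟨g', hg, _⟩ | ⟨k', hk, h1⟩
    · injection hg with h2 _; cases h2
    · injection hk with h2 _; injection h2 with h3; rwa [h3]
  · intro h
    exact Relation.ReflTransGen.trans (Relation.ReflTransGen.single (DStep.dup a)) (dle_black h)

lemma not_dle_BW {a b : List DTree} (h : DLe [B a] [W b]) : False := by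
  obtain ⟨g', hg, _⟩ := dle_B_inv h
  injection hg with h2 _; cases h2
structure OIso (f g : List DTree) : Type where
  e : {f' // DLe f f'} ≃ {g' // DLe g g'}
  ord : ∀ a b : {f' // DLe f f'}, DLe a.1 b.1 ↔ DLe (e a).1 (e b).1

def OIso.refl (f : List DTree) : OIso f f := ⟨Equiv.refl _, fun _ _ => Iff.rfl⟩

def OIso.trans {f g h} (A : OIso f g) (B : OIso g h) : OIso f h :=
  ⟨A.e.trans B.e, fun a b => (A.ord a b).trans (B.ord _ _)⟩

def OIso.symm {f g} (A : OIso f g) : OIso g f := by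
  refine ⟨A.e.symm, fun a b => ?_⟩
  have := A.ord (A.e.symm a) (A.e.symm b)
  simpa using this.symm

lemma dle_len_take {a b c : List DTree} (h : DLe (a ++ b) c) :
    (c.take a.length).length = a.length := by
  have := dle_length h
  simp at this
  simp [List.length_take]
  omega

noncomputable def OIso.concat {a a' b b'} (A : OIso a a') (B : OIso b b') :
    OIso (a ++ b) (a' ++ b') := by
  have lenA : ∀ u : {f' // DLe a f'}, (A.e u).1.length = a'.length :=
    fun u => (dle_length (A.e u).2).symm
  have lenA' : ∀ u : {f' // DLe a f'}, u.1.length = a.length :=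
    fun u => (dle_length u.2).symm
  have lenB' : ∀ u : {f' // DLe b f'}, u.1.length = b.length :=
    fun u => (dle_length u.2).symm
  let F : {c // DLe (a ++ b) c} → {c // DLe (a' ++ b') c} := fun c =>
    ⟨(A.e ⟨c.1.take a.length, dle_take c.2⟩).1 ++ (B.e ⟨c.1.drop a.length, dle_drop c.2⟩).1,
      dle_append (A.e _).2 (B.e _).2⟩
  have hinj : Function.Injective F := by
    intro c d hcd
    have h1 := congrArg Subtype.val hcd
    simp only [F] at h1
    obtain ⟨h2, h3⟩ := List.append_inj h1 (by rw [lenA, lenA])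
    have h4 : (⟨c.1.take a.length, dle_take c.2⟩ : {f' // DLe a f'})
        = ⟨d.1.take a.length, dle_take d.2⟩ := A.e.injective (Subtype.ext h2)
    have h5 : (⟨c.1.drop a.length, dle_drop c.2⟩ : {f' // DLe b f'})
        = ⟨d.1.drop a.length, dle_drop d.2⟩ := B.e.injective (Subtype.ext h3)
    have h6 := congrArg Subtype.val h4
    have h7 := congrArg Subtype.val h5
    simp only at h6 h7
    apply Subtype.ext
    rw [← List.take_append_drop a.length c.1, ← List.take_append_drop a.length d.1, h6, h7]
  have hsurj : Function.Surjective F := by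
    intro y
    set u := A.e.symm ⟨y.1.take a'.length, dle_take y.2⟩ with hu
    set v := B.e.symm ⟨y.1.drop a'.length, dle_drop y.2⟩ with hv
    refine ⟨⟨u.1 ++ v.1, dle_append u.2 v.2⟩, ?_⟩
    apply Subtype.ext
    show (A.e ⟨(u.1 ++ v.1).take a.length, _⟩).1 ++ (B.e ⟨(u.1 ++ v.1).drop a.length, _⟩).1 = y.1
    have ht : (u.1 ++ v.1).take a.length = u.1 := List.take_left' (lenA' u)
    have hd : (u.1 ++ v.1).drop a.length = v.1 := List.drop_left' (lenA' u)
    have e1 : (⟨(u.1 ++ v.1).take a.length, dle_take (dle_append u.2 v.2)⟩ : {f' // DLe a f'}) = u :=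
      Subtype.ext ht
    have e2 : (⟨(u.1 ++ v.1).drop a.length, dle_drop (dle_append u.2 v.2)⟩ : {f' // DLe b f'}) = v :=
      Subtype.ext hd
    rw [e1, e2, hu, hv, Equiv.apply_symm_apply, Equiv.apply_symm_apply]
    exact List.take_append_drop a'.length y.1
  refine ⟨Equiv.ofBijective F ⟨hinj, hsurj⟩, fun c d => ?_⟩
  have hc := List.take_append_drop a.length c.1
  have hd := List.take_append_drop a.length d.1
  have key : DLe c.1 d.1 ↔
      DLe (c.1.take a.length) (d.1.take a.length) ∧ DLe (c.1.drop a.length) (d.1.drop a.length) := by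
    conv_lhs => rw [← hc, ← hd]
    exact dle_append_iff (by rw [dle_len_take c.2, dle_len_take d.2])
  rw [key, A.ord ⟨c.1.take a.length, dle_take c.2⟩ ⟨d.1.take a.length, dle_take d.2⟩,
    B.ord ⟨c.1.drop a.length, dle_drop c.2⟩ ⟨d.1.drop a.length, dle_drop d.2⟩]
  show _ ∧ _ ↔ DLe (F c).1 (F d).1
  exact (dle_append_iff (by rw [lenA, lenA])).symm
lemma OIso.concat_apply {a a' b b'} (A : OIso a a') (B : OIso b b')
    (c : {c // DLe (a ++ b) c}) :
    ((A.concat B).e c).1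
      = (A.e ⟨c.1.take a.length, dle_take c.2⟩).1 ++ (B.e ⟨c.1.drop a.length, dle_drop c.2⟩).1 :=
  rfl

lemma OIso.concat_double {g h} (A : OIso g h) (u : {f' // DLe g f'})
    (hu : DLe (g ++ g) (u.1 ++ u.1)) :
    ((A.concat A).e ⟨u.1 ++ u.1, hu⟩).1 = (A.e u).1 ++ (A.e u).1 := by
  rw [OIso.concat_apply]
  have hl : u.1.length = g.length := (dle_length u.2).symm
  have e1 : (⟨(u.1 ++ u.1).take g.length, dle_take hu⟩ : {f' // DLe g f'}) = u :=
    Subtype.ext (List.take_left' hl)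
  have e2 : (⟨(u.1 ++ u.1).drop g.length, dle_drop hu⟩ : {f' // DLe g f'}) = u :=
    Subtype.ext (List.drop_left' hl)
  rw [e1, e2]

noncomputable def OIso.black (g : List DTree) : OIso g [DTree.B g] := by
  let F : {f' // DLe g f'} → {x // DLe [DTree.B g] x} := fun u => ⟨[DTree.B u.1], dle_black u.2⟩
  have hinj : Function.Injective F := by
    intro u v huv
    have h := congrArg Subtype.val huv
    injection h with h1 _
    injection h1 with h2
    exact Subtype.ext h2
  have hsurj : Function.Surjective F := by
    intro y
    obtain ⟨g', hg, h1⟩ := dle_B_inv y.2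
    exact ⟨⟨g', h1⟩, Subtype.ext hg.symm⟩
  exact ⟨Equiv.ofBijective F ⟨hinj, hsurj⟩, fun u v => dle_BB.symm⟩

def whiteSumFun (g : List DTree) :
    ({g' // DLe g g'} ⊕ {k // DLe (g ++ g) k}) → {x // DLe [DTree.W g] x} := fun s =>
  match s with
  | Sum.inl u => ⟨[DTree.W u.1], dle_WW.mpr u.2⟩
  | Sum.inr v => ⟨[DTree.B v.1], dle_WB.mpr v.2⟩

noncomputable def whiteSum (g : List DTree) :
    ({g' // DLe g g'} ⊕ {k // DLe (g ++ g) k}) ≃ {x // DLe [DTree.W g] x} := by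
  have hinj : Function.Injective (whiteSumFun g) := by
    intro s t hst
    have h := congrArg Subtype.val hst
    rcases s with u | v <;> rcases t with u' | v'
    · injection h with h1 _; injection h1 with h2
      exact congrArg Sum.inl (Subtype.ext h2)
    · injection h with h1 _; injection h1
    · injection h with h1 _; injection h1
    · injection h with h1 _; injection h1 with h2
      exact congrArg Sum.inr (Subtype.ext h2)
  have hsurj : Function.Surjective (whiteSumFun g) := by
    intro y
    rcases dle_W_inv y.2 with ⟨g', hg, h1⟩ | ⟨k, hk, h1⟩
    · exact ⟨Sum.inl ⟨g', h1⟩, Subtype.ext hg.symm⟩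
    · exact ⟨Sum.inr ⟨k, h1⟩, Subtype.ext hk.symm⟩
  exact Equiv.ofBijective _ ⟨hinj, hsurj⟩

lemma whiteSum_inl (g : List DTree) (u : {g' // DLe g g'}) :
    (whiteSum g (Sum.inl u)).1 = [DTree.W u.1] := rfl

lemma whiteSum_inr (g : List DTree) (v : {k // DLe (g ++ g) k}) :
    (whiteSum g (Sum.inr v)).1 = [DTree.B v.1] := rfl

noncomputable def OIso.white {g h} (A : OIso g h) : OIso [DTree.W g] [DTree.W h] := by
  let C := A.concat A
  refine ⟨(whiteSum g).symm.trans ((Equiv.sumCongr A.e C.e).trans (whiteSum h)), fun x y => ?_⟩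
  obtain ⟨s, rfl⟩ := (whiteSum g).surjective x
  obtain ⟨t, rfl⟩ := (whiteSum g).surjective y
  simp only [Equiv.trans_apply, Equiv.symm_apply_apply, Equiv.sumCongr_apply]
  cases s with
  | inl u =>
    cases t with
    | inl u' =>
      simp only [Sum.map_inl, whiteSum_inl, dle_WW]
      exact A.ord u u'
    | inr v =>
      simp only [Sum.map_inl, Sum.map_inr, whiteSum_inl, whiteSum_inr, dle_WB]
      have hu : DLe (g ++ g) (u.1 ++ u.1) := dle_append u.2 u.2
      rw [C.ord ⟨u.1 ++ u.1, hu⟩ v, OIso.concat_double A u hu]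
  | inr v =>
    cases t with
    | inl u =>
      simp only [Sum.map_inl, Sum.map_inr, whiteSum_inl, whiteSum_inr]
      exact ⟨fun hh => absurd hh not_dle_BW, fun hh => absurd hh not_dle_BW⟩
    | inr v' =>
      simp only [Sum.map_inr, whiteSum_inr, dle_BB]
      exact C.ord v v'
theorem oiso_pr (f : List DTree) : Nonempty (OIso f (prF f)) := by
  match f with
  | [] =>
    rw [show prF [] = [] from by simp [prF]]
    exact ⟨OIso.refl []⟩
  | DTree.W g :: f =>
    obtain ⟨A⟩ := oiso_pr g
    obtain ⟨B⟩ := oiso_pr f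
    rw [show prF (DTree.W g :: f) = [DTree.W (prF g)] ++ prF f from by simp [prF, prT]]
    exact ⟨(A.white).concat B⟩
  | DTree.B g :: f =>
    obtain ⟨A⟩ := oiso_pr g
    obtain ⟨B⟩ := oiso_pr f
    rw [show prF (DTree.B g :: f) = prF g ++ prF f from by simp [prF, prT]]
    exact ⟨(((OIso.black g).symm.trans A).concat B :
      OIso ([DTree.B g] ++ f) (prF g ++ prF f))⟩
termination_by sizeOf f
decreasing_by all_goals (simp_wf <;> omega)


/-- the posets `D*(f)` and `D*(pr f)` are order-isomorphic. -/
theorem pruning_poset_iso (f : List DTree) :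
    ∃ φ : {f' : List DTree // DLe f f'} ≃ {g : List DTree // DLe (prF f) g},
      ∀ a b : {f' : List DTree // DLe f f'},
        DLe a.1 b.1 ↔ DLe (φ a).1 (φ b).1 := by
  obtain ⟨A⟩ := oiso_pr f
  exact ⟨A.e, A.ord⟩
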